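/- Let R be a Γ-graded integral domain and ⋆ a homogeneous star operation on R. Then the classical star operation e(⋆) is an extension of ⋆: for every nonzero homogeneous fractional ideal A of R, A^{e(⋆)} = A^⋆. -/

import Mathlib

open FractionalIdeal
open scoped Classical

section Setup

variable {Γ : Type*} [AddCommMonoid Γ] [LinearOrder Γ] [IsOrderedCancelAddMonoid Γ] [DecidableEq Γ]
  {R : Type*} [CommRing R] [IsDomain R]
  (𝒜 : Γ → AddSubgroup R) [GradedRing 𝒜]
  (K : Type*) [Field K] [Algebra R K] [IsFractionRing R K]

/-- The integral ideal corresponding to a fractional ideal contained in `R`. -/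
def idealOf (J : FractionalIdeal (nonZeroDivisors R) K) : Ideal R :=
  (J : Submodule R K).comap (Algebra.linearMap R K)

/-- An integral ideal is homogeneous if it contains all homogeneous components of its elements. -/
def IsHomIdeal (I : Ideal R) : Prop := ∀ f ∈ I, ∀ γ : Γ, GradedRing.proj 𝒜 γ f ∈ I

/-- `C(I)`: the homogeneous ideal generated by the homogeneous components of elements of `I`. -/
def homC (I : Ideal R) : Ideal R :=
  Ideal.span {x | ∃ f ∈ I, ∃ γ : Γ, x = GradedRing.proj 𝒜 γ f}

/-- `C(J)` for a fractional ideal `J ⊆ R`, as a fractional ideal. -/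
def Cfrac (J : FractionalIdeal (nonZeroDivisors R) K) : FractionalIdeal (nonZeroDivisors R) K :=
  ↑(homC 𝒜 (idealOf K J))

/-- A fractional ideal is homogeneous if some nonzero homogeneous `s ∈ R` multiplies it into a
homogeneous integral ideal. -/
def IsHomFrac (A : FractionalIdeal (nonZeroDivisors R) K) : Prop :=
  ∃ s : R, s ≠ 0 ∧ SetLike.IsHomogeneousElem 𝒜 s ∧
    spanSingleton (nonZeroDivisors R) (algebraMap R K s) * A ≤ 1 ∧
    IsHomIdeal 𝒜 (idealOf K (spanSingleton (nonZeroDivisors R) (algebraMap R K s) * A))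

/-- A homogeneous element of the homogeneous quotient field, viewed inside `K`. -/
def IsHomElem (x : K) : Prop :=
  ∃ a b : R, SetLike.IsHomogeneousElem 𝒜 a ∧ SetLike.IsHomogeneousElem 𝒜 b ∧ b ≠ 0 ∧
    x * algebraMap R K b = algebraMap R K a

end Setup

/-- A homogeneous star operation on the graded domain `R`. -/
structure HomStarOp {Γ : Type*} [AddCommMonoid Γ] [LinearOrder Γ] [IsOrderedCancelAddMonoid Γ] [DecidableEq Γ]
    {R : Type*} [CommRing R] [IsDomain R] (𝒜 : Γ → AddSubgroup R) [GradedRing 𝒜]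
    (K : Type*) [Field K] [Algebra R K] [IsFractionRing R K] where
  toFun : FractionalIdeal (nonZeroDivisors R) K → FractionalIdeal (nonZeroDivisors R) K
  hom : ∀ A, A ≠ 0 → IsHomFrac 𝒜 K A → IsHomFrac 𝒜 K (toFun A)
  map_span : ∀ x : K, x ≠ 0 → IsHomElem 𝒜 K x →
    toFun (spanSingleton (nonZeroDivisors R) x) = spanSingleton (nonZeroDivisors R) x
  map_smul : ∀ x : K, x ≠ 0 → IsHomElem 𝒜 K x → ∀ A, A ≠ 0 → IsHomFrac 𝒜 K A →
    toFun (spanSingleton (nonZeroDivisors R) x * A) = spanSingleton (nonZeroDivisors R) x * toFun A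
  le_star : ∀ A, A ≠ 0 → IsHomFrac 𝒜 K A → A ≤ toFun A
  mono : ∀ A B, A ≠ 0 → B ≠ 0 → IsHomFrac 𝒜 K A → IsHomFrac 𝒜 K B → A ≤ B → toFun A ≤ toFun B
  idem : ∀ A, A ≠ 0 → IsHomFrac 𝒜 K A → toFun (toFun A) = toFun A

/-- A classical star operation on the domain `R`. -/
structure StarOp (R : Type*) [CommRing R] [IsDomain R]
    (K : Type*) [Field K] [Algebra R K] [IsFractionRing R K] where
  toFun : FractionalIdeal (nonZeroDivisors R) K → FractionalIdeal (nonZeroDivisors R) K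
  map_span : ∀ x : K, x ≠ 0 →
    toFun (spanSingleton (nonZeroDivisors R) x) = spanSingleton (nonZeroDivisors R) x
  map_smul : ∀ x : K, x ≠ 0 → ∀ A, A ≠ 0 →
    toFun (spanSingleton (nonZeroDivisors R) x * A) = spanSingleton (nonZeroDivisors R) x * toFun A
  le_star : ∀ A, A ≠ 0 → A ≤ toFun A
  mono : ∀ A B, A ≠ 0 → B ≠ 0 → A ≤ B → toFun A ≤ toFun B
  idem : ∀ A, A ≠ 0 → toFun (toFun A) = toFun A

section EStar

variable {Γ : Type*} [AddCommMonoid Γ] [LinearOrder Γ] [IsOrderedCancelAddMonoid Γ] [DecidableEq Γ]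
  {R : Type*} [CommRing R] [IsDomain R]
  (𝒜 : Γ → AddSubgroup R) [GradedRing 𝒜]
  (K : Type*) [Field K] [Algebra R K] [IsFractionRing R K]

/-- The submodule `⋂ { z⁻¹ (C(zA))^⋆ : 0 ≠ z ∈ (R : A) }`. -/
def eStarSub (s : HomStarOp 𝒜 K) (A : FractionalIdeal (nonZeroDivisors R) K) : Submodule R K :=
  ⨅ z ∈ {z : K | z ≠ 0 ∧ spanSingleton (nonZeroDivisors R) z * A ≤ 1},
    ↑(spanSingleton (nonZeroDivisors R) z⁻¹ *
      s.toFun (Cfrac 𝒜 K (spanSingleton (nonZeroDivisors R) z * A)))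

/-- The extension `e(⋆)` of a homogeneous star operation `⋆`,
`A^{e(⋆)} := ⋂ { z⁻¹ (C(zA))^⋆ : 0 ≠ z ∈ (R : A) }` (which is a fractional ideal whenever
`A` is a nonzero fractional ideal). -/
noncomputable def eStar (s : HomStarOp 𝒜 K) (A : FractionalIdeal (nonZeroDivisors R) K) :
    FractionalIdeal (nonZeroDivisors R) K :=
  if h : IsFractional (nonZeroDivisors R) (eStarSub 𝒜 K s A) then ⟨_, h⟩ else 0

end EStar

/-! The infimum defining `A^{e(⋆)}` is attained at `z = t` for a homogeneous `t` making `tA` a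
homogeneous ideal: then `C(tA) = tA` and `t⁻¹ (tA)^⋆ = A^⋆`. For the reverse inclusion it suffices
that `yA ⊆ B` implies `yA^⋆ ⊆ B^⋆` for homogeneous `A`, `B` and arbitrary `y ∈ K`, applied to
`zA ⊆ C(zA)`. Clearing denominators, `A = J` and `B = I` are homogeneous ideals. Pick a nonzero
homogeneous `j ∈ J` and write `yj = f ∈ I`; then `fJ ⊆ jI`, and as colon ideals of homogeneous
ideals are homogeneous, also `f_γ J ⊆ jI` for every component `f_γ`. Thus `y = Σ f_γ / j` is a
sum of homogeneous elements each multiplying `J` into `I`, and for those the claim is an axiom of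
`⋆`. -/

open scoped nonZeroDivisors

section GradedIdeal

variable {ι σ A : Type*} [DecidableEq ι] [AddMonoid ι] [CommSemiring A] [SetLike σ A]
  [AddSubmonoidClass σ A] {𝒜 : ι → σ} [GradedRing 𝒜]

theorem Ideal.IsHomogeneous.colon [IsRightCancelAdd ι] {N J : Ideal A}
    (hN : N.IsHomogeneous 𝒜) (hJ : J.IsHomogeneous 𝒜) :
    (N.colon (J : Set A)).IsHomogeneous 𝒜 := by
  let : AddRightCancelMonoid ι := { add_right_cancel := IsRightCancelAdd.add_right_cancel }
  intro γ r hr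
  refine Submodule.mem_colon.mpr fun u hu => ?_
  rw [← DirectSum.sum_support_decompose 𝒜 u, Finset.smul_sum]
  refine N.sum_mem fun δ _ => ?_
  -- `(r u_δ)_{γ+δ} = r_γ u_δ`, and `r u_δ ∈ N` because `u_δ ∈ J`
  rw [smul_eq_mul, ← DirectSum.coe_decompose_mul_add_of_right_mem 𝒜 (SetLike.coe_mem _)]
  exact hN _ (Submodule.mem_colon.mp hr _ (hJ δ hu))

theorem Ideal.IsHomogeneous.exists_isHomogeneousElem_ne_zero {J : Ideal A}
    (hJ : J.IsHomogeneous 𝒜) (hJ0 : J ≠ ⊥) :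
    ∃ j ∈ J, j ≠ 0 ∧ SetLike.IsHomogeneousElem 𝒜 j := by
  obtain ⟨x, hx, hx0⟩ := Submodule.exists_mem_ne_zero_of_ne_bot hJ0
  by_contra! h
  refine hx0 ?_
  rw [← DirectSum.sum_support_decompose 𝒜 x]
  exact Finset.sum_eq_zero fun γ _ => by_contra fun hγ =>
    h _ (hJ γ hx) hγ ⟨γ, SetLike.coe_mem _⟩

end GradedIdeal

namespace FractionalIdeal

section Field

variable {R K : Type*} [CommRing R] [Field K] [Algebra R K] {S : Submonoid R}
  [IsLocalization S K]

theorem spanSingleton_inv_mul_spanSingleton_mul {z : K} (hz : z ≠ 0)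
    (B : FractionalIdeal S K) : spanSingleton S z⁻¹ * (spanSingleton S z * B) = B := by
  rw [← mul_assoc, spanSingleton_mul_spanSingleton, inv_mul_cancel₀ hz, spanSingleton_one,
    one_mul]

theorem spanSingleton_mul_ne_zero {z : K} (hz : z ≠ 0) {B : FractionalIdeal S K}
    (hB : B ≠ 0) : spanSingleton S z * B ≠ 0 := fun h =>
  hB (by rw [← spanSingleton_inv_mul_spanSingleton_mul hz B, h, mul_zero])

end Field

theorem spanSingleton_sum_mul_le {R P ι : Type*} [CommRing R] [CommRing P] [Algebra R P]
    {S : Submonoid R} [IsLocalization S P] (t : Finset ι) (x : ι → P)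
    {B C : FractionalIdeal S P} (h : ∀ i ∈ t, spanSingleton S (x i) * B ≤ C) :
    spanSingleton S (∑ i ∈ t, x i) * B ≤ C := by
  refine spanSingleton_mul_le_iff.mpr fun b hb => ?_
  rw [Finset.sum_mul]
  exact Submodule.sum_mem (C : Submodule R P) fun i hi =>
    spanSingleton_mul_le_iff.mp (h i hi) b hb

end FractionalIdeal

section IdealOf

variable {R K : Type*} [CommRing R] [Field K] [Algebra R K]

theorem idealOf_coeIdeal [IsFractionRing R K] (I : Ideal R) :
    idealOf K (I : FractionalIdeal R⁰ K) = I := by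
  ext x
  simp only [idealOf, Submodule.mem_comap, Algebra.linearMap_apply, mem_coe, mem_coeIdeal,
    (IsFractionRing.injective R K).eq_iff, exists_eq_right]

theorem coeIdeal_idealOf {J : FractionalIdeal R⁰ K} (hJ : J ≤ 1) :
    (idealOf K J : FractionalIdeal R⁰ K) = J := by
  ext x
  simp only [mem_coeIdeal, idealOf, Submodule.mem_comap, Algebra.linearMap_apply, mem_coe]
  refine ⟨fun ⟨a, ha, hax⟩ => hax ▸ ha, fun hx => ?_⟩
  obtain ⟨a, rfl⟩ := (mem_one_iff _).mp (hJ hx)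
  exact ⟨a, hx, rfl⟩

end IdealOf

section Homogeneous

variable {Γ : Type*} [AddCommMonoid Γ] [DecidableEq Γ]
  {R : Type*} [CommRing R] {𝒜 : Γ → AddSubgroup R} [GradedRing 𝒜]
  {K : Type*} [Field K] [Algebra R K]

theorem isHomIdeal_iff {I : Ideal R} : IsHomIdeal 𝒜 I ↔ I.IsHomogeneous 𝒜 := by
  simp only [IsHomIdeal, GradedRing.proj_apply]
  exact ⟨fun h γ f hf => h f hf γ, fun h f hf γ => h γ hf⟩

theorem homC_eq_toIdeal_homogeneousHull (I : Ideal R) :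
    homC 𝒜 I = (I.homogeneousHull 𝒜).toIdeal := by
  refine congrArg Ideal.span (Set.ext fun x => ?_)
  simp only [Set.mem_ofPred_eq, GradedRing.proj_apply, Subtype.exists, exists_prop]
  exact ⟨fun ⟨f, hf, γ, h⟩ => ⟨γ, f, hf, h.symm⟩, fun ⟨γ, f, hf, h⟩ => ⟨f, hf, γ, h.symm⟩⟩

theorem Cfrac_eq_self {J : FractionalIdeal R⁰ K} (hJ : J ≤ 1)
    (hJh : IsHomIdeal 𝒜 (idealOf K J)) : Cfrac 𝒜 K J = J := by
  rw [Cfrac, homC_eq_toIdeal_homogeneousHull,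
    (isHomIdeal_iff.mp hJh).toIdeal_homogeneousHull_eq_self, coeIdeal_idealOf hJ]

theorem isHomElem_algebraMap [Nontrivial R] {a : R} (ha : SetLike.IsHomogeneousElem 𝒜 a) :
    IsHomElem 𝒜 K (algebraMap R K a) :=
  ⟨a, 1, ha, ⟨0, SetLike.one_mem_graded 𝒜⟩, one_ne_zero, by simp⟩

variable [IsFractionRing R K]

theorem isHomFrac_iff {A : FractionalIdeal R⁰ K} :
    IsHomFrac 𝒜 K A ↔ ∃ t : R, t ≠ 0 ∧ SetLike.IsHomogeneousElem 𝒜 t ∧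
      ∃ I : Ideal R, I.IsHomogeneous 𝒜 ∧ spanSingleton R⁰ (algebraMap R K t) * A = I := by
  constructor
  · rintro ⟨t, ht0, hth, hle, hI⟩
    exact ⟨t, ht0, hth, _, isHomIdeal_iff.mp hI, (coeIdeal_idealOf hle).symm⟩
  · rintro ⟨t, ht0, hth, I, hI, htA⟩
    refine ⟨t, ht0, hth, htA ▸ coeIdeal_le_one, ?_⟩
    rwa [htA, idealOf_coeIdeal, isHomIdeal_iff]

theorem le_Cfrac {J : FractionalIdeal R⁰ K} (hJ : J ≤ 1) : J ≤ Cfrac 𝒜 K J := by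
  rw [Cfrac, homC_eq_toIdeal_homogeneousHull]
  conv_lhs => rw [← coeIdeal_idealOf hJ]
  exact (coeIdeal_le_coeIdeal K).mpr (Ideal.le_toIdeal_homogeneousHull 𝒜 _)

variable [IsDomain R]

theorem isHomFrac_coeIdeal {I : Ideal R} (hI : I.IsHomogeneous 𝒜) :
    IsHomFrac 𝒜 K (I : FractionalIdeal R⁰ K) :=
  isHomFrac_iff.mpr ⟨1, one_ne_zero, ⟨0, SetLike.one_mem_graded 𝒜⟩, I, hI, by simp⟩

theorem IsHomFrac.spanSingleton_mul {x : K} (hx : IsHomElem 𝒜 K x) {A : FractionalIdeal R⁰ K}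
    (hA : IsHomFrac 𝒜 K A) : IsHomFrac 𝒜 K (spanSingleton R⁰ x * A) := by
  obtain ⟨a, b, hah, hbh, hb0, hxb⟩ := hx
  obtain ⟨t, ht0, hth, I, hI, htA⟩ := isHomFrac_iff.mp hA
  refine isHomFrac_iff.mpr ⟨b * t, mul_ne_zero hb0 ht0, hbh.mul hth, Ideal.span {a} * I,
    (Ideal.homogeneous_span 𝒜 _ (by simpa using hah)).mul hI, ?_⟩
  rw [coeIdeal_mul, coeIdeal_span_singleton, ← htA, ← hxb]
  simp only [← mul_assoc, spanSingleton_mul_spanSingleton, map_mul]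
  ring_nf

theorem isHomFrac_Cfrac (J : FractionalIdeal R⁰ K) : IsHomFrac 𝒜 K (Cfrac 𝒜 K J) := by
  rw [Cfrac, homC_eq_toIdeal_homogeneousHull]
  exact isHomFrac_coeIdeal (Ideal.homogeneousHull 𝒜 _).isHomogeneous

end Homogeneous

namespace HomStarOp

variable {Γ : Type*} [AddCommMonoid Γ] [LinearOrder Γ] [IsOrderedCancelAddMonoid Γ] [DecidableEq Γ]
  {R : Type*} [CommRing R] [IsDomain R] {𝒜 : Γ → AddSubgroup R} [GradedRing 𝒜]
  {K : Type*} [Field K] [Algebra R K] [IsFractionRing R K] (s : HomStarOp 𝒜 K)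

theorem spanSingleton_mul_le_of_isHomElem {x : K} (hx : IsHomElem 𝒜 K x)
    {A B : FractionalIdeal R⁰ K} (hA : A ≠ 0) (hAh : IsHomFrac 𝒜 K A) (hBh : IsHomFrac 𝒜 K B)
    (h : spanSingleton R⁰ x * A ≤ B) : spanSingleton R⁰ x * s.toFun A ≤ s.toFun B := by
  rcases eq_or_ne x 0 with rfl | hx0
  · simp
  have hxA := spanSingleton_mul_ne_zero hx0 hA
  rw [← s.map_smul x hx0 hx A hA hAh]
  exact s.mono _ _ hxA (fun hB => hxA (FractionalIdeal.le_zero_iff.mp (hB ▸ h)))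
    (hAh.spanSingleton_mul hx) hBh h

theorem spanSingleton_mul_coeIdeal_le {I J : Ideal R} (hI : I.IsHomogeneous 𝒜)
    (hJ : J.IsHomogeneous 𝒜) (hJ0 : J ≠ ⊥) {y : K}
    (h : spanSingleton R⁰ y * (J : FractionalIdeal R⁰ K) ≤ I) :
    spanSingleton R⁰ y * s.toFun J ≤ s.toFun I := by
  obtain ⟨j, hjJ, hj0, hjh⟩ := hJ.exists_isHomogeneousElem_ne_zero hJ0
  have hj : algebraMap R K j ≠ 0 := (map_ne_zero_iff _ (IsFractionRing.injective R K)).mpr hj0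
  have hyJ : ∀ u ∈ J, ∃ m ∈ I, algebraMap R K m = y * algebraMap R K u := fun u hu =>
    (mem_coeIdeal R⁰).mp (spanSingleton_mul_le_iff.mp h _ (mem_coeIdeal_of_mem R⁰ hu))
  obtain ⟨f, -, hf⟩ := hyJ j hjJ
  have hcolon : f ∈ (Ideal.span {j} * I).colon (J : Set R) :=
    Submodule.mem_colon.mpr fun u hu => by
      obtain ⟨m, hmI, hm⟩ := hyJ u hu
      refine Ideal.mem_span_singleton_mul.mpr ⟨m, hmI, IsFractionRing.injective R K ?_⟩
      simp only [map_mul, smul_eq_mul, hf, hm]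
      ring
  have hjI : (Ideal.span {j} * I).IsHomogeneous 𝒜 :=
    (Ideal.homogeneous_span 𝒜 _ (by simpa using hjh)).mul hI
  have hcomp (γ : Γ) : spanSingleton R⁰ (algebraMap R K (DirectSum.decompose 𝒜 f γ) /
      algebraMap R K j) * (J : FractionalIdeal R⁰ K) ≤ I := by
    refine spanSingleton_mul_le_iff.mpr fun _ _ => ?_
    obtain ⟨u, hu, rfl⟩ := (mem_coeIdeal R⁰).mp ‹_›
    obtain ⟨m, hmI, hm⟩ := Ideal.mem_span_singleton_mul.mp
      (Submodule.mem_colon.mp (hjI.colon hJ γ hcolon) u hu)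
    refine (mem_coeIdeal R⁰).mpr ⟨m, hmI, ?_⟩
    rw [div_mul_eq_mul_div, eq_div_iff hj, ← map_mul, ← map_mul, mul_comm m, hm, smul_eq_mul]
  have hy : y = ∑ γ ∈ (DirectSum.decompose 𝒜 f).support,
      algebraMap R K (DirectSum.decompose 𝒜 f γ) / algebraMap R K j := by
    rw [← Finset.sum_div, ← map_sum, DirectSum.sum_support_decompose, hf,
      mul_div_cancel_right₀ _ hj]
  rw [hy]
  refine spanSingleton_sum_mul_le _ _ fun γ _ => s.spanSingleton_mul_le_of_isHomElem ?_
    (coeIdeal_ne_zero.mpr hJ0) (isHomFrac_coeIdeal hJ) (isHomFrac_coeIdeal hI) (hcomp γ)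
  exact ⟨_, j, ⟨γ, SetLike.coe_mem _⟩, hjh, hj0, div_mul_cancel₀ _ hj⟩

theorem spanSingleton_mul_le {A B : FractionalIdeal R⁰ K} (hA : A ≠ 0) (hAh : IsHomFrac 𝒜 K A)
    (hBh : IsHomFrac 𝒜 K B) {y : K} (h : spanSingleton R⁰ y * A ≤ B) :
    spanSingleton R⁰ y * s.toFun A ≤ s.toFun B := by
  rcases eq_or_ne y 0 with rfl | hy0
  · simp
  have hB : B ≠ 0 := fun hB =>
    spanSingleton_mul_ne_zero hy0 hA (FractionalIdeal.le_zero_iff.mp (hB ▸ h))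
  obtain ⟨a, ha0, hah, J, hJ, hJA⟩ := isHomFrac_iff.mp hAh
  obtain ⟨b, hb0, hbh, I, hI, hIB⟩ := isHomFrac_iff.mp hBh
  have ha : algebraMap R K a ≠ 0 := (map_ne_zero_iff _ (IsFractionRing.injective R K)).mpr ha0
  have hb : algebraMap R K b ≠ 0 := (map_ne_zero_iff _ (IsFractionRing.injective R K)).mpr hb0
  have hJ0 : J ≠ ⊥ := coeIdeal_ne_zero.mp (hJA ▸ spanSingleton_mul_ne_zero ha hA)
  have hscalar : spanSingleton R⁰ (y * algebraMap R K b / algebraMap R K a) *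
      spanSingleton R⁰ (algebraMap R K a) =
      spanSingleton R⁰ (algebraMap R K b) * spanSingleton R⁰ y := by
    rw [spanSingleton_mul_spanSingleton, spanSingleton_mul_spanSingleton]
    congr 1
    field_simp
  have key := s.spanSingleton_mul_coeIdeal_le hI hJ hJ0
    (y := y * algebraMap R K b / algebraMap R K a) (by
      rw [← hJA, ← hIB, ← mul_assoc, hscalar, mul_assoc]
      exact mul_right_mono h)
  rw [← hJA, ← hIB, s.map_smul _ ha (isHomElem_algebraMap hah) A hA hAh,
    s.map_smul _ hb (isHomElem_algebraMap hbh) B hB hBh, ← mul_assoc, hscalar, mul_assoc] at key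
  simpa only [spanSingleton_inv_mul_spanSingleton_mul hb] using
    mul_right_mono (a := spanSingleton R⁰ (algebraMap R K b)⁻¹) key

theorem eStarSub_eq {A : FractionalIdeal R⁰ K} (hA : A ≠ 0) (hAh : IsHomFrac 𝒜 K A) :
    eStarSub 𝒜 K s A = s.toFun A := by
  refine le_antisymm ?_ (le_iInf₂ fun z ⟨hz, hzA⟩ => coe_le_coe.mpr ?_)
  · have ⟨t, ht0, hth, htA, htAh⟩ := hAh
    have ht : algebraMap R K t ≠ 0 := (map_ne_zero_iff _ (IsFractionRing.injective R K)).mpr ht0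
    refine (iInf₂_le _ ⟨ht, htA⟩).trans_eq ?_
    rw [Cfrac_eq_self htA htAh, s.map_smul _ ht (isHomElem_algebraMap hth) A hA hAh,
      spanSingleton_inv_mul_spanSingleton_mul ht]
  · rw [← spanSingleton_inv_mul_spanSingleton_mul hz (s.toFun A)]
    exact mul_right_mono (s.spanSingleton_mul_le hA hAh (isHomFrac_Cfrac _) (le_Cfrac hzA))

end HomStarOp

theorem eStar_eq_of_eStarSub_eq {Γ : Type*} [AddCommMonoid Γ] [LinearOrder Γ]
    [IsOrderedCancelAddMonoid Γ] [DecidableEq Γ] {R : Type*} [CommRing R] [IsDomain R]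
    {𝒜 : Γ → AddSubgroup R} [GradedRing 𝒜] {K : Type*} [Field K] [Algebra R K]
    [IsFractionRing R K] {s : HomStarOp 𝒜 K} {A B : FractionalIdeal R⁰ K}
    (h : eStarSub 𝒜 K s A = B) : eStar 𝒜 K s A = B := by
  rw [eStar]
  exact (dif_pos (h ▸ B.isFractional)).trans (coeToSubmodule_injective h)

/-- `e(⋆)` extends `⋆`: `A^{e(⋆)} = A^⋆` for nonzero homogeneous fractional `A`. -/
theorem stmt_2
    {Γ : Type*} [AddCommMonoid Γ] [LinearOrder Γ] [IsOrderedCancelAddMonoid Γ] [DecidableEq Γ]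
    {R : Type*} [CommRing R] [IsDomain R]
    (𝒜 : Γ → AddSubgroup R) [GradedRing 𝒜]
    (K : Type*) [Field K] [Algebra R K] [IsFractionRing R K]
    (s : HomStarOp 𝒜 K) (A : FractionalIdeal (nonZeroDivisors R) K)
    (hA : A ≠ 0) (hhom : IsHomFrac 𝒜 K A) :
    eStar 𝒜 K s A = s.toFun A :=
  eStar_eq_of_eStarSub_eq (s.eStarSub_eq hA hhom)
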